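/- Any nonzero finite-dimensional commutative real algebra (A, ∘) metrized by a positive definite invariant bilinear form h contains a nonzero idempotent, i.e., an element c ≠ 0 with c∘c = c. -/

import Mathlib

/-!
By invariance, `h (x ∘ y) z` is a symmetric trilinear form, so polarization and the
nondegeneracy of `h` show that the cubic form `φ x = h (x ∘ x) x` is not identically zero;
being odd, it takes a positive maximum at some `c` on the unit sphere of `h`. The gradient of `φ`
with respect to `h` is `3 x ∘ x`, so by Lagrange multipliers `c ∘ c = μ c` with
`μ = φ c > 0`, and `μ⁻¹ c` is idempotent.
-/

open Metric
open scoped RealInnerProductSpace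

theorem LinearMap.eq_zero_of_forall_apply_self_eq_zero {K M N : Type*} [Field K] [NeZero (2 : K)]
    [AddCommGroup M] [Module K M] [AddCommGroup N] [Module K N] {B : M →ₗ[K] M →ₗ[K] N}
    (hcomm : ∀ x y, B x y = B y x) (hself : ∀ x, B x x = 0) : B = 0 := by
  ext x y
  have h2 : (2 : K) • B x y = 0 := by
    simpa [hself, hcomm y x, two_smul] using hself (x + y)
  exact (smul_eq_zero.mp h2).resolve_left two_ne_zero

theorem LinearMap.exists_idempotent_of_apply_self_eq_smul {K M : Type*} [Field K]
    [AddCommGroup M] [Module K M] (B : M →ₗ[K] M →ₗ[K] M) {c : M} {μ : K} (hc : c ≠ 0)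
    (hμ : μ ≠ 0) (hcc : B c c = μ • c) : ∃ e, e ≠ 0 ∧ B e e = e :=
  ⟨μ⁻¹ • c, smul_ne_zero (inv_ne_zero hμ) hc, by
    simp only [map_smul, LinearMap.smul_apply, hcc, smul_smul]
    rw [inv_mul_cancel₀ hμ, mul_one]⟩

section InvariantProduct

variable {E : Type*} [NormedAddCommGroup E] [InnerProductSpace ℝ E]

theorem inner_apply_comm_right {B : E → E → E} (hcomm : ∀ x y, B x y = B y x)
    (hinv : ∀ x y z, ⟪B x y, z⟫ = ⟪x, B y z⟫) (x y z : E) : ⟪B x y, z⟫ = ⟪B x z, y⟫ := by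
  rw [hinv, hinv, hcomm z y]

theorem exists_inner_apply_self_self_pos {B : E →ₗ[ℝ] E →ₗ[ℝ] E} (hcomm : ∀ x y, B x y = B y x)
    (hinv : ∀ x y z, ⟪B x y, z⟫ = ⟪x, B y z⟫) (hB : B ≠ 0) : ∃ x, 0 < ⟪B x x, x⟫ := by
  suffices ∃ x, ⟪B x x, x⟫ ≠ 0 by
    obtain ⟨x, hx⟩ := this
    rcases hx.lt_or_gt with hneg | hpos
    · exact ⟨-x, by simpa using hneg⟩
    · exact ⟨x, hpos⟩
  by_contra! hcubic
  refine hB (LinearMap.eq_zero_of_forall_apply_self_eq_zero hcomm fun x => ?_)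
  have hxy : ∀ y, ⟪B x x, y⟫ = 0 := by
    intro y
    have hadd := hcubic (x + y)
    have hsub := hcubic (x - y)
    simp only [map_add, map_sub, LinearMap.add_apply, LinearMap.sub_apply, inner_add_left,
      inner_sub_left, inner_add_right, inner_sub_right, hcubic, hcomm y x,
      inner_apply_comm_right (B := fun x y => B x y) hcomm hinv x y x] at hadd hsub
    linarith
  exact inner_self_eq_zero.mp (hxy _)

theorem apply_self_eq_smul_of_isLocalExtrOn_sphere [CompleteSpace E] {B : E →L[ℝ] E →L[ℝ] E}
    (hcomm : ∀ x y, B x y = B y x) (hinv : ∀ x y z, ⟪B x y, z⟫ = ⟪x, B y z⟫) {c : E}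
    (hc : c ∈ sphere (0 : E) 1) (hextr : IsLocalExtrOn (fun x => ⟪B x x, x⟫) (sphere 0 1) c) :
    B c c = ⟪B c c, c⟫ • c := by
  have hc1 : ‖c‖ = 1 := by simpa using hc
  have hlevel : sphere (0 : E) 1 = {x | ‖x‖ ^ 2 = ‖c‖ ^ 2} := by
    ext x
    rw [mem_sphere_zero_iff_norm, Set.mem_ofPred_eq, hc1, one_pow,
      pow_eq_one_iff_of_nonneg (norm_nonneg x) two_ne_zero]
  rw [hlevel] at hextr
  have hφ := (B.hasStrictFDerivAt_of_bilinear (hasStrictFDerivAt_id c)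
    (hasStrictFDerivAt_id c)).inner ℝ (hasStrictFDerivAt_id c)
  obtain ⟨a, b, hab, hlag⟩ := hextr.exists_multipliers_of_hasStrictFDerivAt_1d
    (hasStrictFDerivAt_norm_sq c) hφ
  have hlin : (2 * a) • c + (3 * b) • B c c = 0 := by
    refine ext_inner_right ℝ fun v => ?_
    have := congrArg (fun L => L v) hlag
    simp only [id_eq, ContinuousLinearMap.precompR_apply, ContinuousLinearMap.compL_apply,
      ContinuousLinearMap.comp_id, add_apply, smul_apply, coe_innerSL_apply, nsmul_eq_mul,
      Nat.cast_ofNat, smul_eq_mul, ContinuousLinearMap.comp_apply, ContinuousLinearMap.prod_apply,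
      ContinuousLinearMap.precompL_apply, ContinuousLinearMap.id_apply, fderivInnerCLM_apply,
      zero_apply] at this
    rw [inner_add_left, hcomm v c,
      inner_apply_comm_right (B := fun x y => B x y) hcomm hinv c v c] at this
    simp only [inner_add_left, real_inner_smul_left, inner_zero_left]
    linear_combination this
  have hb : b ≠ 0 := by
    rintro rfl
    have ha : a ≠ 0 := by rintro rfl; exact hab rfl
    have hc0 : c ≠ 0 := ne_zero_of_mem_unit_sphere ⟨c, hc⟩
    simp [ha, hc0] at hlin
  have hμ : B c c = (-(2 * a) / (3 * b)) • c := by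
    apply smul_right_injective E (mul_ne_zero three_ne_zero hb)
    simp only [smul_smul, mul_div_cancel₀ _ (mul_ne_zero three_ne_zero hb)]
    linear_combination (norm := module) hlin
  rw [hμ, real_inner_smul_left, real_inner_self_eq_norm_sq, hc1, one_pow, mul_one]

theorem exists_nonzero_idempotent_of_inner [FiniteDimensional ℝ E] {B : E →ₗ[ℝ] E →ₗ[ℝ] E}
    (hcomm : ∀ x y, B x y = B y x) (hinv : ∀ x y z, ⟪B x y, z⟫ = ⟪x, B y z⟫) (hB : B ≠ 0) :
    ∃ c, c ≠ 0 ∧ B c c = c := by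
  let B' := B.toContinuousBilinearMap
  obtain ⟨x, hx⟩ := exists_inner_apply_self_self_pos hcomm hinv hB
  have hx0 : x ≠ 0 := by rintro rfl; simp at hx
  set y := ‖x‖⁻¹ • x
  have hy : y ∈ sphere (0 : E) 1 := by
    simpa [y] using norm_smul_inv_norm (𝕜 := ℝ) hx0
  have hyφ : 0 < ⟪B y y, y⟫ := by
    have hr : 0 < ‖x‖⁻¹ := inv_pos.mpr (norm_pos_iff.mpr hx0)
    simp only [y, map_smul, LinearMap.smul_apply, real_inner_smul_left, real_inner_smul_right]
    exact mul_pos hr (mul_pos hr (mul_pos hr hx))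
  obtain ⟨c, hc, hmax⟩ := (isCompact_sphere (0 : E) 1).exists_isMaxOn ⟨y, hy⟩
    (f := fun x => ⟪B' x x, x⟫) (by fun_prop)
  have hcc := apply_self_eq_smul_of_isLocalExtrOn_sphere (B := B') hcomm hinv hc
    (IsMaxFilter.isExtr hmax.localize)
  exact B.exists_idempotent_of_apply_self_eq_smul (ne_zero_of_mem_unit_sphere ⟨c, hc⟩)
    (hyφ.trans_le (hmax hy)).ne' hcc

end InvariantProduct

@[reducible] def LinearMap.innerProductCore {A : Type*} [AddCommGroup A]
    [Module ℝ A] (h : A →ₗ[ℝ] A →ₗ[ℝ] ℝ) (hsymm : ∀ x y, h x y = h y x)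
    (hpos : ∀ x, x ≠ 0 → 0 < h x x) : InnerProductSpace.Core ℝ A where
  inner x y := h x y
  conj_inner_symm x y := by simpa using hsymm y x
  re_inner_nonneg x := by
    rcases eq_or_ne x 0 with rfl | hx
    · simp
    · simpa using (hpos x hx).le
  add_left x y z := by simp
  smul_left x y r := by simp
  definite x hx := by contrapose! hx; exact (hpos x hx).ne'

theorem exists_nonzero_idempotent
    {A : Type*} [AddCommGroup A] [Module ℝ A] [FiniteDimensional ℝ A]
    (mul : A →ₗ[ℝ] A →ₗ[ℝ] A)
    (hcomm : ∀ x y : A, mul x y = mul y x)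
    (h : A →ₗ[ℝ] A →ₗ[ℝ] ℝ)
    (hsymm : ∀ x y : A, h x y = h y x)
    (hpos : ∀ x : A, x ≠ 0 → 0 < h x x)
    (hinv : ∀ x y z : A, h (mul x y) z = h x (mul y z))
    (hnz : mul ≠ 0) :
    ∃ c : A, c ≠ 0 ∧ mul c c = c := by
  let core := h.innerProductCore hsymm hpos
  let _ : NormedAddCommGroup A := core.toNormedAddCommGroup
  let _ : InnerProductSpace ℝ A := InnerProductSpace.ofCore core.toCore
  exact exists_nonzero_idempotent_of_inner hcomm hinv hnz
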